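/- arXiv:cs/0612108 — 2 statements merged into one kernel-verified Lean document; each statement's English description precedes it below -/
import Mathlib

section
/- An acyclic b-matching preference instance has at most one stable configuration: if A and B are both stable configurations of an acyclic instance, then A = B. -/
/-!
A formalization of b-matching preference instances (peers, acceptance graph,
quotas, preference lists given by ranks), configurations, blocking pairs,
stability, active initiatives, loving pairs, and acyclicity.
-/

open Finset

/-- A b-matching preference instance on a finite set `P` of peers:
an acceptance graph `G`, quotas `b`, and for each peer `p` a rank function
(`rank p q` is the position of `q` in `p`'s preference list, smaller is better),
injective on the neighbors of `p` (strict preferences). -/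
structure PrefInstance (P : Type*) [Fintype P] [DecidableEq P] where
  G : SimpleGraph P
  b : P → ℕ
  rank : P → P → ℕ
  rank_injOn : ∀ p : P, Set.InjOn (rank p) {q | G.Adj p q}

namespace PrefInstance

variable {P : Type*} [Fintype P] [DecidableEq P] (I : PrefInstance P)

/-- `p` prefers `q` to `r` (both neighbors of `p`, `q` ranked better). -/
def Prefers (p q r : P) : Prop :=
  I.G.Adj p q ∧ I.G.Adj p r ∧ I.rank p q < I.rank p r

/-- The instance is acyclic: there is no preference cycle, i.e. no `k ≥ 3`
distinct peers `p_1, …, p_k` (indices modulo `k`) such that each `p_i`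
prefers `p_{i+1}` to `p_{i-1}`. -/
def Acyclic : Prop :=
  ¬ ∃ (k : ℕ) (f : ZMod k → P), 3 ≤ k ∧ Function.Injective f ∧
      ∀ i : ZMod k, I.Prefers (f i) (f (i + 1)) (f (i - 1))

/-- The mates of `p` in a set `C` of edges. -/
def mates (C : Finset (Sym2 P)) (p : P) : Finset P :=
  Finset.univ.filter fun q => s(p, q) ∈ C

/-- `C` is a configuration: a set of edges of the acceptance graph in which every
peer `p` has at most `b p` mates. -/
def IsConfig (C : Finset (Sym2 P)) : Prop :=
  (∀ e ∈ C, e ∈ I.G.edgeSet) ∧ ∀ p : P, (mates C p).card ≤ I.b p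

/-- `p` is under-mated in `C`: it has fewer than `b p` mates. -/
def UnderMated (C : Finset (Sym2 P)) (p : P) : Prop :=
  (mates C p).card < I.b p

/-- `p` is willing to pair with `q`: it is under-mated, or it prefers `q`
to its worst mate in `C`. -/
def Willing (C : Finset (Sym2 P)) (p q : P) : Prop :=
  I.UnderMated C p ∨ ∃ w ∈ mates C p, I.rank p q < I.rank p w

/-- `{p, q}` is a blocking pair for `C`: an edge of the acceptance graph not in
`C` such that each endpoint is under-mated or prefers the other to its worst mate. -/
def BlockingPair (C : Finset (Sym2 P)) (p q : P) : Prop :=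
  I.G.Adj p q ∧ s(p, q) ∉ C ∧ I.Willing C p q ∧ I.Willing C q p

/-- A configuration is stable if it admits no blocking pair. -/
def IsStable (C : Finset (Sym2 P)) : Prop :=
  I.IsConfig C ∧ ∀ p q : P, ¬ I.BlockingPair C p q

/-- The edges to be dropped at `p` when `p` gets a new mate: none if `p` is
under-mated, otherwise the edge joining `p` to its worst mate in `C`. -/
def dropEdges (C : Finset (Sym2 P)) (p : P) : Finset (Sym2 P) :=
  if (mates C p).card < I.b p then ∅
  else ((mates C p).filter fun w => ∀ r ∈ mates C p, I.rank p r ≤ I.rank p w).image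
      fun w => s(p, w)

/-- The configuration produced by resolving the blocking pair `{p, q}` of `C`:
add the edge `{p, q}` and, for each of `p` and `q` already at full quota,
remove the edge joining it to its worst mate. -/
def resolve (C : Finset (Sym2 P)) (p q : P) : Finset (Sym2 P) :=
  insert s(p, q) (C \ (I.dropEdges C p ∪ I.dropEdges C q))

/-- `C'` is obtained from `C` by an active initiative. -/
def ActiveStep (C C' : Finset (Sym2 P)) : Prop :=
  ∃ p q : P, I.BlockingPair C p q ∧ C' = I.resolve C p q

/-- `{p, q}` is a loving pair: an edge of the acceptance graph whose endpoints
rank each other first. -/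
def LovingPair (p q : P) : Prop :=
  I.G.Adj p q ∧ (∀ r : P, I.G.Adj p r → I.rank p q ≤ I.rank p r) ∧
    ∀ r : P, I.G.Adj q r → I.rank q p ≤ I.rank q r

open scoped Classical in
/-- The best-mate initiative of peer `p` at configuration `C`: resolve the
blocking pair `{p, q}` where `q` is the peer `p` prefers most among all peers
forming a blocking pair with `p`; if `p` belongs to no blocking pair, `C` is
left unchanged. -/
noncomputable def bestMateInit (C : Finset (Sym2 P)) (p : P) : Finset (Sym2 P) :=
  if h : ∃ q : P, I.BlockingPair C p q ∧
      ∀ r : P, I.BlockingPair C p r → I.rank p q ≤ I.rank p r then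
    I.resolve C p h.choose
  else C

end PrefInstance

variable {P : Type*} [Fintype P] [DecidableEq P]

open PrefInstance
namespace PrefInstance
variable {P : Type*} [Fintype P] [DecidableEq P] (I : PrefInstance P)

lemma shrink_walk {g : ℕ → P} (hcond : ∀ n, I.Prefers (g (n+1)) (g (n+2)) (g n))
    {m a : ℕ} (hm : 3 ≤ m) (hw0 : g (a + m) = g a)
    (hw1 : I.Prefers (g a) (g (a+1)) (g (a + (m-1)))) :
    ∀ n, I.Prefers (g (a + (n+1) % m)) (g (a + (n+2) % m)) (g (a + n % m)) := by
  intro n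
  set r := n % m with hrdef
  have hr : r < m := Nat.mod_lt _ (by omega)
  have h1 : (n + 1) % m = (r + 1) % m := by
    rw [Nat.add_mod, ← hrdef, Nat.mod_eq_of_lt (show 1 < m by omega)]
  have h2 : (n + 2) % m = (r + 2) % m := by
    rw [Nat.add_mod, ← hrdef, Nat.mod_eq_of_lt (show 2 < m by omega)]
  rcases Nat.lt_or_ge (r + 2) m with hc | hc
  · rw [h1, h2, Nat.mod_eq_of_lt hc, Nat.mod_eq_of_lt (by omega)]
    have := hcond (a + r)
    have e1 : a + r + 1 = a + (r + 1) := by omega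
    have e2 : a + r + 2 = a + (r + 2) := by omega
    rwa [e1, e2] at this
  · rcases Nat.lt_or_ge (r + 1) m with hc1 | hc1
    · -- r + 2 = m
      have hc2 : r + 2 = m := by omega
      rw [h1, h2, Nat.mod_eq_of_lt hc1, hc2, Nat.mod_self]
      have := hcond (a + r)
      have e1 : a + r + 1 = a + (r + 1) := by omega
      have e2 : a + r + 2 = a + m := by omega
      rwa [e1, e2, hw0] at this
    · -- r + 1 = m
      have hc1' : r + 1 = m := by omega
      rw [h1, h2, hc1', Nat.mod_self, show r + 2 = m + 1 by omega,
        Nat.add_mod_left, Nat.mod_eq_of_lt (show 1 < m by omega)]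
      have e : r = m - 1 := by omega
      rw [e]
      simpa using hw1

lemma no_walk (hI : I.Acyclic) :
    ∀ k : ℕ, ∀ g : ℕ → P, 1 ≤ k → Function.Periodic g k →
      (∀ n, I.Prefers (g (n+1)) (g (n+2)) (g n)) → False := by
  intro k
  induction k using Nat.strong_induction_on with
  | _ k IH =>
  intro g hk hper hcond
  have gap1 : ∀ x, g x = g (x+1) → False := by
    intro x h
    have h2 := (hcond x).2.1
    rw [← h] at h2
    exact I.G.irrefl (h ▸ h2)
  have gap2 : ∀ x, g x = g (x+2) → False := by
    intro x h
    have h2 := (hcond x).2.2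
    rw [← h] at h2
    exact lt_irrefl _ h2
  rcases Nat.lt_or_ge k 3 with hk3 | hk3
  · interval_cases k
    · exact gap1 0 (hper 0).symm
    · have : g 2 = g 0 := by
        have := hper 0; simpa using this
      exact gap2 0 this.symm
  · haveI : NeZero k := ⟨by omega⟩
    haveI : Fact (1 < k) := ⟨by omega⟩
    by_cases hinj : Function.Injective fun i : ZMod k => g i.val
    · apply hI
      refine ⟨k, fun i => g i.val, hk3, hinj, ?_⟩
      intro i
      have hv1 : (i + 1).val = (i.val + 1) % k := by
        rw [ZMod.val_add, ZMod.val_one]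
      have hvm : (i - 1).val = (i.val + (k-1)) % k := by
        have e0 : ((k-1 : ℕ) : ZMod k) = -1 := by
          push_cast [Nat.cast_sub (show 1 ≤ k by omega)]
          simp [ZMod.natCast_self]
        have e : i - 1 = i + ((k-1 : ℕ) : ZMod k) := by rw [e0]; ring
        rw [e, ZMod.val_add, ZMod.val_natCast,
          Nat.mod_eq_of_lt (show k - 1 < k by omega)]
      simp only [hv1, hvm]
      rw [hper.map_mod_nat, hper.map_mod_nat]
      have h0 := hcond (i.val + (k-1))
      have e1 : i.val + (k-1) + 1 = i.val + k := by omega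
      have e2 : i.val + (k-1) + 2 = (i.val + 1) + k := by omega
      rwa [e1, e2, hper, hper] at h0
    · obtain ⟨i, j, hgij, hij⟩ := Function.not_injective_iff.mp hinj
      have hvij : i.val ≠ j.val := fun h => hij (ZMod.val_injective k h)
      obtain ⟨a, b, hab, hbk, hgab⟩ :
          ∃ a b : ℕ, a < b ∧ b < k ∧ g a = g b := by
        rcases Nat.lt_or_ge i.val j.val with h | h
        · exact ⟨i.val, j.val, h, ZMod.val_lt j, hgij⟩
        · exact ⟨j.val, i.val, by omega, ZMod.val_lt i, hgij.symm⟩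
      set m := b - a with hm
      set m' := k - m with hm'
      have hm1 : 1 ≤ m := by omega
      have hm'1 : 1 ≤ m' := by omega
      rcases Nat.lt_or_ge m 3 with hmlt | hm3
      · -- m = 1 or 2
        rcases (show m = 1 ∨ m = 2 by omega) with h | h
        · exact gap1 a (by rw [hgab]; congr 1; omega)
        · exact gap2 a (by rw [hgab]; congr 1; omega)
      rcases Nat.lt_or_ge m' 3 with hm'lt | hm'3
      · rcases (show m' = 1 ∨ m' = 2 by omega) with h | h
        · refine gap1 b ?_
          have : g (b + 1) = g (a + k) := by congr 1; omega
          rw [this, hper, hgab]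
        · refine gap2 b ?_
          have : g (b + 2) = g (a + k) := by congr 1; omega
          rw [this, hper, hgab]
      have hAdj1 : I.G.Adj (g a) (g (a+1)) := ((hcond a).2.1).symm
      by_cases hrk : I.rank (g a) (g (a+1)) < I.rank (g a) (g (a + (m-1)))
      · -- shrink to walk of length m
        have hw0 : g (a + m) = g a := by
          rw [show a + m = b by omega]; exact hgab.symm
        have hAdj2 : I.G.Adj (g a) (g (a + (m-1))) := by
          have := (hcond (a + (m-1))).2.1
          rw [show a + (m-1) + 1 = a + m by omega, hw0] at this
          exact this
        have hcond' := I.shrink_walk hcond hm3 hw0 ⟨hAdj1, hAdj2, hrk⟩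
        exact IH m (by omega) (fun n => g (a + n % m)) hm1
          (fun n => by simp only [Nat.add_mod_right]) hcond'
      · -- shrink to walk of length m'
        push_neg at hrk
        have hw0 : g (b + m') = g b := by
          rw [show b + m' = a + k by omega, hper, hgab]
        have hAdjb1 : I.G.Adj (g b) (g (b+1)) := ((hcond b).2.1).symm
        have hAdjb2 : I.G.Adj (g b) (g (b + (m'-1))) := by
          have := (hcond (a + (k-1))).2.1
          rw [show a + (k-1) + 1 = a + k by omega, hper, hgab] at this
          rw [show b + (m'-1) = a + (k-1) by omega]
          exact this
        have hrank : I.rank (g b) (g (b+1)) < I.rank (g b) (g (b + (m'-1))) := by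
          have r1 : I.rank (g b) (g (b+1)) < I.rank (g b) (g (a + (m-1))) := by
            have := (hcond (a + (m-1))).2.2
            rwa [show a + (m-1) + 1 = b by omega,
              show a + (m-1) + 2 = b + 1 by omega] at this
          have r2 : I.rank (g a) (g (a+1)) < I.rank (g a) (g (a + (k-1))) := by
            have := (hcond (a + (k-1))).2.2
            rwa [show a + (k-1) + 1 = a + k by omega,
              show a + (k-1) + 2 = (a+1) + k by omega, hper, hper] at this
          rw [show b + (m'-1) = a + (k-1) by omega, ← hgab]
          calc I.rank (g a) (g (b+1)) < I.rank (g a) (g (a + (m-1))) := by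
                rw [hgab]; exact r1
            _ ≤ I.rank (g a) (g (a+1)) := hrk
            _ < I.rank (g a) (g (a + (k-1))) := r2
        have hcond' := I.shrink_walk hcond hm'3 hw0 ⟨hAdjb1, hAdjb2, hrank⟩
        exact IH m' (by omega) (fun n => g (b + n % m')) hm'1
          (fun n => by simp only [Nat.add_mod_right]) hcond'

end PrefInstance
namespace PrefInstance
variable {P : Type*} [Fintype P] [DecidableEq P] (I : PrefInstance P)

lemma mem_mates' {C : Finset (Sym2 P)} {p q : P} : q ∈ mates C p ↔ s(p,q) ∈ C := by
  simp [mates]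

lemma step_lemma {C D : Finset (Sym2 P)} (hC : I.IsStable C) (hD : I.IsStable D)
    {x y : P} (hxyC : s(x,y) ∈ C) (hxyD : s(x,y) ∉ D) (hnw : ¬ I.Willing D x y) :
    ∃ w : P, s(x,w) ∈ D ∧ s(x,w) ∉ C ∧ ¬ I.Willing C w x ∧ I.Prefers x w y := by
  have hAdjxy : I.G.Adj x y := (SimpleGraph.mem_edgeSet _).mp (hC.1.1 _ hxyC)
  rw [Willing] at hnw; push_neg at hnw
  obtain ⟨hfull, hbet⟩ := hnw
  rw [UnderMated, not_lt] at hfull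
  have hstrict : ∀ w ∈ mates D x, I.rank x w < I.rank x y := by
    intro w hw
    have hwD : s(x,w) ∈ D := mem_mates'.mp hw
    have hne : w ≠ y := fun h => hxyD (h ▸ hwD)
    have hAdjxw : I.G.Adj x w := (SimpleGraph.mem_edgeSet _).mp (hD.1.1 _ hwD)
    have hle := hbet w hw
    rcases lt_or_eq_of_le hle with h | h
    · exact h
    · exact absurd (I.rank_injOn x hAdjxw hAdjxy h) hne
  have hyC : y ∈ mates C x := mem_mates'.mpr hxyC
  have hyD : y ∉ mates D x := fun h => hxyD (mem_mates'.mp h)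
  have hsub : ¬ (mates D x ⊆ mates C x) := by
    intro hsub
    have h1 : insert y (mates D x) ⊆ mates C x := Finset.insert_subset hyC hsub
    have h2 := Finset.card_le_card h1
    rw [Finset.card_insert_of_notMem hyD] at h2
    have h3 := hC.1.2 x
    omega
  obtain ⟨w, hwD, hwC⟩ := Finset.not_subset.mp hsub
  have hwDm : s(x,w) ∈ D := mem_mates'.mp hwD
  have hwCm : s(x,w) ∉ C := fun h => hwC (mem_mates'.mpr h)
  have hAdjxw : I.G.Adj x w := (SimpleGraph.mem_edgeSet _).mp (hD.1.1 _ hwDm)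
  have hpref : I.Prefers x w y := ⟨hAdjxw, hAdjxy, hstrict w hwD⟩
  refine ⟨w, hwDm, hwCm, ?_, hpref⟩
  have hnb := hC.2 w x
  rw [BlockingPair] at hnb; push_neg at hnb
  have hswx : s(w,x) ∉ C := by rw [Sym2.eq_swap]; exact hwCm
  have hWxw : I.Willing C x w := Or.inr ⟨y, hyC, hstrict w hwD⟩
  exact fun hW => hnb hAdjxw.symm hswx hW hWxw

lemma main_aux (hI : I.Acyclic) {A B : Finset (Sym2 P)}
    (hA : I.IsStable A) (hB : I.IsStable B)
    {e : Sym2 P} (heA : e ∈ A) (heB : e ∉ B) : False := by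
  classical
  set Inv : P → P → Prop := fun x y =>
    (s(x,y) ∈ A ∧ s(x,y) ∉ B ∧ ¬ I.Willing B x y) ∨
    (s(x,y) ∈ B ∧ s(x,y) ∉ A ∧ ¬ I.Willing A x y) with hInv
  have hstep : ∀ x y, Inv x y → ∃ w, Inv w x ∧ I.Prefers x w y := by
    rintro x y (⟨h1, h2, h3⟩ | ⟨h1, h2, h3⟩)
    · obtain ⟨w, hw1, hw2, hw3, hw4⟩ := I.step_lemma hA hB h1 h2 h3
      exact ⟨w, Or.inr ⟨by rwa [Sym2.eq_swap], by rwa [Sym2.eq_swap], hw3⟩, hw4⟩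
    · obtain ⟨w, hw1, hw2, hw3, hw4⟩ := I.step_lemma hB hA h1 h2 h3
      exact ⟨w, Or.inl ⟨by rwa [Sym2.eq_swap], by rwa [Sym2.eq_swap], hw3⟩, hw4⟩
  have hstart : ∃ x y, Inv x y := by
    obtain ⟨⟨p, q⟩, rfl⟩ := e.exists_rep
    have heA' : s(p,q) ∈ A := heA
    have heB' : s(p,q) ∉ B := heB
    have hAdj : I.G.Adj p q := (SimpleGraph.mem_edgeSet _).mp (hA.1.1 _ heA')
    have hnb := hB.2 p q
    rw [BlockingPair] at hnb; push_neg at hnb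
    by_cases h : I.Willing B p q
    · refine ⟨q, p, Or.inl ⟨by rwa [Sym2.eq_swap], by rwa [Sym2.eq_swap], ?_⟩⟩
      exact hnb hAdj heB' h
    · exact ⟨p, q, Or.inl ⟨heA', heB', h⟩⟩
  obtain ⟨x0, y0, hxy0⟩ := hstart
  let S := {v : P × P // Inv v.1 v.2}
  have hfin : Finite S := Subtype.finite
  have hstep' : ∀ s : S, ∃ w, Inv w s.1.1 ∧ I.Prefers s.1.1 w s.1.2 :=
    fun s => hstep _ _ s.2
  let F : S → S := fun s => ⟨((hstep' s).choose, s.1.1), ((hstep' s).choose_spec).1⟩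
  have hF : ∀ s : S, I.Prefers s.1.1 (F s).1.1 s.1.2 :=
    fun s => ((hstep' s).choose_spec).2
  have hF2 : ∀ s : S, (F s).1.2 = s.1.1 := fun s => rfl
  let seq : ℕ → S := fun n => F^[n] ⟨(x0, y0), hxy0⟩
  have hseqsucc : ∀ n, seq (n+1) = F (seq n) := fun n =>
    Function.iterate_succ_apply' F n _
  let g : ℕ → P := fun n => (seq n).1.2
  have hg1 : ∀ n, g (n+1) = (seq n).1.1 := by
    intro n
    show (seq (n+1)).1.2 = _
    rw [hseqsucc]
  have hgcond : ∀ n, I.Prefers (g (n+1)) (g (n+2)) (g n) := by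
    intro n
    have h := hF (seq n)
    rw [hg1 n]
    have h2 : g (n+2) = (F (seq n)).1.1 := by
      rw [show n+2 = (n+1)+1 from rfl, hg1 (n+1), hseqsucc]
    rw [h2]
    exact h
  obtain ⟨i0, j0, hij0, hseqij0⟩ := Finite.exists_ne_map_eq_of_infinite seq
  obtain ⟨i, j, hlt, hseqij⟩ : ∃ i j, i < j ∧ seq i = seq j := by
    rcases Nat.lt_or_ge i0 j0 with h | h
    · exact ⟨i0, j0, h, hseqij0⟩
    · exact ⟨j0, i0, by omega, hseqij0.symm⟩
  have hperiod : ∀ n, seq (n + j) = seq (n + i) := by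
    intro n
    show F^[n + j] _ = F^[n + i] _
    rw [Function.iterate_add_apply, Function.iterate_add_apply]
    exact congrArg _ hseqij.symm
  set t := j - i with ht
  have ht1 : 1 ≤ t := by omega
  have hper : Function.Periodic (fun n => g (n + i)) t := by
    intro n
    simp only
    rw [show n + t + i = n + j by omega]
    show (seq (n+j)).1.2 = (seq (n+i)).1.2
    rw [hperiod]
  have hcond2 : ∀ n, I.Prefers (g (n + 1 + i)) (g (n + 2 + i)) (g (n + i)) := by
    intro n
    have := hgcond (n + i)
    rwa [show n + i + 1 = n + 1 + i by omega, show n + i + 2 = n + 2 + i by omega]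
      at this
  exact I.no_walk hI t (fun n => g (n + i)) ht1 hper hcond2

end PrefInstance

/-- An acyclic b-matching preference instance has at most one
stable configuration. -/
theorem acyclic_stable_unique (I : PrefInstance P) (hI : I.Acyclic)
    (A B : Finset (Sym2 P)) (hA : I.IsStable A) (hB : I.IsStable B) : A = B := by
  by_contra hne
  have hdiff : ∃ e, (e ∈ A ∧ e ∉ B) ∨ (e ∈ B ∧ e ∉ A) := by
    by_contra h
    push_neg at h
    apply hne
    ext e
    have := h e
    constructor <;> intro hm <;> by_contra hm2 <;> tauto
  obtain ⟨e, h | h⟩ := hdiff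
  · exact I.main_aux hI hA hB h.1 h.2
  · exact I.main_aux hI hB hA h.1 h.2
end

section
/- For any acyclic b-matching preference instance and any initial configuration C, there exists a sequence of at most B/2 active initiatives leading from C to the unique stable configuration of the instance, where B = Σ_{p∈P} b(p) is the sum of all quotas. -/
/-!
A formalization of b-matching preference instances (peers, acceptance graph,
quotas, preference lists given by ranks), configurations, blocking pairs,
stability, active initiatives, loving pairs, and acyclicity.
-/

open Finset

namespace PrefInstance

variable {P : Type*} [Fintype P] [DecidableEq P] (I : PrefInstance P)

/-!
Following favourite neighbours from a non-isolated peer must eventually cycle, and in an acyclic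
instance the cycle has length two: a loving pair `{p, q}`. A loving pair blocks every
configuration that omits it, so it lies in every stable configuration and can be added by one
initiative. Deleting its edge and one unit of quota at each end leaves a smaller acyclic instance
whose dynamics on configurations without `{p, q}` is exactly that of the original instance on
configurations with `{p, q}`; an edge at a peer of quota `0` can simply be deleted. Induction on
the number of edges gives uniqueness, and the bound because each loving pair costs at most one
initiative and two units of quota.
-/

lemma _root_.Function.exists_iterate_mem_periodicPts {α : Type*} [Finite α] (f : α → α) (x : α) :
    ∃ n, f^[n] x ∈ Function.periodicPts f := by
  obtain ⟨m, n, hmn, h⟩ := Finite.exists_ne_map_eq_of_infinite (f^[·] x)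
  wlog hlt : m < n generalizing m n
  · exact this n m hmn.symm h.symm (by omega)
  refine ⟨m, Function.mk_mem_periodicPts (n := n - m) (by omega) ?_⟩
  change f^[n - m] (f^[m] x) = f^[m] x
  rw [← Function.iterate_add_apply, Nat.sub_add_cancel hlt.le]
  exact h.symm

lemma rank_lt_of_forall_rank_le {p q r : P} (hq : I.G.Adj p q)
    (hmin : ∀ s, I.G.Adj p s → I.rank p q ≤ I.rank p s) (hr : I.G.Adj p r) (hrq : r ≠ q) :
    I.rank p q < I.rank p r :=
  (hmin r hr).lt_of_ne fun h => hrq (I.rank_injOn p hq hr h).symm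

section Mates

variable {C : Finset (Sym2 P)} {a b x : P}

lemma mem_mates : b ∈ mates C a ↔ s(a, b) ∈ C := by
  simp [mates]

lemma mates_insert_left : mates (insert s(a, b) C) a = insert b (mates C a) := by
  ext w
  simp only [mem_mates, mem_insert, Sym2.congr_right]

lemma mates_insert_right : mates (insert s(a, b) C) b = insert a (mates C b) := by
  rw [Sym2.eq_swap, mates_insert_left]

lemma mates_insert_of_ne (ha : x ≠ a) (hb : x ≠ b) : mates (insert s(a, b) C) x = mates C x := by
  ext w
  simp [mem_mates, ha, hb]

lemma mates_sdiff_subset (U : Finset (Sym2 P)) : mates (C \ U) x ⊆ mates C x := fun _ h =>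
  mem_mates.mpr (mem_sdiff.mp (mem_mates.mp h)).1

end Mates

section Configurations

variable {I} {C : Finset (Sym2 P)}

lemma IsConfig.adj (hC : I.IsConfig C) {p q : P} (h : q ∈ mates C p) : I.G.Adj p q :=
  hC.1 _ (mem_mates.mp h)

lemma Willing.underMated_or_nonempty {p q : P} (h : I.Willing C p q) :
    I.UnderMated C p ∨ (mates C p).Nonempty :=
  h.imp_right fun ⟨w, hw, _⟩ => ⟨w, hw⟩

lemma dropEdges_subset (p : P) : I.dropEdges C p ⊆ C := by
  unfold dropEdges
  split_ifs
  · exact empty_subset _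
  · intro e he
    obtain ⟨w, hw, rfl⟩ := mem_image.mp he
    exact mem_mates.mp (mem_filter.mp hw).1

lemma card_mates_resolve_le (hC : I.IsConfig C) {p q : P}
    (hw : I.Willing C p q) {U : Finset (Sym2 P)} (hU : I.dropEdges C p ⊆ U) :
    (mates (insert s(p, q) (C \ U)) p).card ≤ I.b p := by
  rw [mates_insert_left]
  refine (card_insert_le _ _).trans ?_
  by_cases hum : (mates C p).card < I.b p
  · exact (Nat.add_le_add_right (card_le_card (mates_sdiff_subset U)) 1).trans hum
  obtain ⟨w, hw, -⟩ := hw.resolve_left hum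
  obtain ⟨w₀, hw₀, hmax⟩ := exists_max_image (mates C p) (I.rank p) ⟨w, hw⟩
  have hdrop : s(p, w₀) ∈ U := hU <| by
    rw [dropEdges, if_neg hum]
    exact mem_image.mpr ⟨w₀, mem_filter.mpr ⟨hw₀, hmax⟩, rfl⟩
  have hsub : mates (C \ U) p ⊆ (mates C p).erase w₀ := fun v hv => by
    rw [mem_mates, mem_sdiff] at hv
    exact mem_erase.mpr ⟨by rintro rfl; exact hv.2 hdrop, mem_mates.mpr hv.1⟩
  have := card_le_card hsub
  rw [card_erase_of_mem hw₀] at this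
  have := hC.2 p
  have := card_pos.mpr ⟨w, hw⟩
  omega

lemma IsConfig.resolve (hC : I.IsConfig C) {p q : P} (hB : I.BlockingPair C p q) :
    I.IsConfig (I.resolve C p q) := by
  obtain ⟨hpq, -, hwp, hwq⟩ := hB
  refine ⟨fun e he => ?_, fun x => ?_⟩
  · rcases mem_insert.mp he with rfl | he
    · exact hpq
    · exact hC.1 e (mem_sdiff.mp he).1
  rcases eq_or_ne x p with rfl | hxp
  · exact card_mates_resolve_le hC hwp subset_union_left
  rcases eq_or_ne x q with rfl | hxq
  · rw [PrefInstance.resolve, Sym2.eq_swap]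
    exact card_mates_resolve_le hC hwq subset_union_right
  · rw [PrefInstance.resolve, mates_insert_of_ne hxp hxq]
    exact (card_le_card (mates_sdiff_subset _)).trans (hC.2 x)

lemma IsConfig.activeStep (hC : I.IsConfig C) {C' : Finset (Sym2 P)} (h : I.ActiveStep C C') :
    I.IsConfig C' := by
  obtain ⟨p, q, hB, rfl⟩ := h
  exact hC.resolve hB

end Configurations

def ReachesStableWithin (C : Finset (Sym2 P)) (n : ℕ) : Prop :=
  ∃ (k : ℕ) (f : ℕ → Finset (Sym2 P)), k ≤ n ∧ f 0 = C ∧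
    (∀ i < k, I.ActiveStep (f i) (f (i + 1))) ∧ I.IsStable (f k)

section Paths

variable {I} {C : Finset (Sym2 P)} {m n : ℕ}

lemma IsStable.reachesStableWithin (h : I.IsStable C) (n : ℕ) : I.ReachesStableWithin C n :=
  ⟨0, fun _ => C, n.zero_le, rfl, fun _ hi => absurd hi (Nat.not_lt_zero _), h⟩

lemma ReachesStableWithin.mono (h : I.ReachesStableWithin C m) (hmn : m ≤ n) :
    I.ReachesStableWithin C n :=
  let ⟨k, f, hk, h0, hsteps, hstable⟩ := h
  ⟨k, f, hk.trans hmn, h0, hsteps, hstable⟩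

lemma ReachesStableWithin.cons {C' : Finset (Sym2 P)} (hstep : I.ActiveStep C C')
    (h : I.ReachesStableWithin C' n) : I.ReachesStableWithin C (n + 1) := by
  obtain ⟨k, f, hk, h0, hsteps, hstable⟩ := h
  refine ⟨k + 1, fun | 0 => C | i + 1 => f i, by omega, rfl, fun i hi => ?_, hstable⟩
  rcases i with _ | i
  · rwa [← h0] at hstep
  · exact hsteps i (by omega)

lemma isConfig_of_activeSteps {f : ℕ → Finset (Sym2 P)} {k : ℕ} (h0 : I.IsConfig (f 0))
    (hsteps : ∀ i < k, I.ActiveStep (f i) (f (i + 1))) : ∀ i ≤ k, I.IsConfig (f i)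
  | 0, _ => h0
  | i + 1, hi => (isConfig_of_activeSteps h0 hsteps i (by omega)).activeStep (hsteps i hi)

end Paths

open Classical in
/-- `p` itself when `p` is isolated. -/
noncomputable def favorite (p : P) : P :=
  if h : (I.G.neighborSet p).Nonempty then Function.argminOn (I.rank p) _ h else p

section Favorite

variable {I} {p q : P}

lemma adj_favorite (h : I.G.Adj p q) : I.G.Adj p (I.favorite p) := by
  have hne : (I.G.neighborSet p).Nonempty := ⟨q, h⟩
  rw [favorite, dif_pos hne]
  exact Function.argminOn_mem _ _ hne

lemma rank_favorite_le (h : I.G.Adj p q) : I.rank p (I.favorite p) ≤ I.rank p q := by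
  have hne : (I.G.neighborSet p).Nonempty := ⟨q, h⟩
  rw [favorite, dif_pos hne]
  exact Function.argminOn_le _ _ h

lemma adj_iterate_favorite (h : I.G.Adj p q) (n : ℕ) :
    I.G.Adj (I.favorite^[n] p) (I.favorite^[n + 1] p) := by
  induction n with
  | zero => exact adj_favorite h
  | succ n ih =>
    rw [Function.iterate_succ_apply' _ (n + 1)]
    exact adj_favorite ih.symm

end Favorite

variable {I} in
/-- An orbit of `favorite` of length `k ≥ 3` is a preference cycle. -/
lemma Acyclic.minimalPeriod_favorite_le_two (hI : I.Acyclic) {p q : P} (h : I.G.Adj p q) :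
    Function.minimalPeriod I.favorite p ≤ 2 := by
  set k := Function.minimalPeriod I.favorite p
  by_contra! hk
  have : NeZero k := ⟨by omega⟩
  set f : ZMod k → P := fun i => I.favorite^[i.val] p with hf
  have hf_natCast (n : ℕ) : f n = I.favorite^[n] p := by
    simp only [hf, ZMod.val_natCast]
    exact Function.iterate_mod_minimalPeriod_eq
  have hf_succ (i : ZMod k) : f (i + 1) = I.favorite (f i) := by
    rw [← ZMod.natCast_zmod_val i, ← Nat.cast_succ, hf_natCast, hf_natCast,
      Function.iterate_succ_apply']
  have hf_adj (i : ZMod k) : I.G.Adj (f i) (I.favorite (f i)) := by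
    simpa only [Function.iterate_succ_apply'] using adj_iterate_favorite h i.val
  have hf_inj : Function.Injective f := fun i j hij =>
    ZMod.val_injective k (Function.iterate_injOn_Iio_minimalPeriod (ZMod.val_lt i)
      (ZMod.val_lt j) hij)
  refine hI ⟨k, f, hk, hf_inj, fun i => ?_⟩
  have hprev : f i = I.favorite (f (i - 1)) := by rw [← hf_succ, sub_add_cancel]
  have hne : f (i - 1) ≠ f (i + 1) := fun heq => by
    have h2 : ((2 : ℕ) : ZMod k) = 0 := by
      rw [show ((2 : ℕ) : ZMod k) = i + 1 - (i - 1) by push_cast; ring, hf_inj heq, sub_self]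
    have := Nat.le_of_dvd two_pos ((ZMod.natCast_eq_zero_iff 2 k).mp h2)
    omega
  have hadj_prev : I.G.Adj (f i) (f (i - 1)) := hprev ▸ (hf_adj (i - 1)).symm
  rw [hf_succ]
  exact ⟨hf_adj i, hadj_prev,
    I.rank_lt_of_forall_rank_le (hf_adj i) (fun _ => rank_favorite_le) hadj_prev (hf_succ i ▸ hne)⟩

variable {I} in
lemma Acyclic.exists_lovingPair (hI : I.Acyclic) {x y : P} (h : I.G.Adj x y) :
    ∃ p q, I.LovingPair p q := by
  obtain ⟨n, hn⟩ := Function.exists_iterate_mem_periodicPts I.favorite x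
  set p := I.favorite^[n] x
  have hp : I.G.Adj p (I.favorite p) := by
    simpa only [Function.iterate_succ_apply'] using adj_iterate_favorite h n
  have hpos := Function.minimalPeriod_pos_of_mem_periodicPts hn
  have hle := hI.minimalPeriod_favorite_le_two hp
  have hfix : Function.minimalPeriod I.favorite p ≠ 1 := fun h1 =>
    hp.ne (Function.minimalPeriod_eq_one_iff_isFixedPt.mp h1).symm
  have hperiod : I.favorite (I.favorite p) = p := by
    have := Function.iterate_minimalPeriod (f := I.favorite) (x := p)
    rwa [show Function.minimalPeriod I.favorite p = 2 by omega] at this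
  refine ⟨p, I.favorite p, hp, fun r hr => rank_favorite_le hr, fun r hr => ?_⟩
  simpa only [hperiod] using rank_favorite_le hr

section LovingPair

variable {I} {p q : P}

lemma willing_of_forall_rank_le {C : Finset (Sym2 P)} (hC : I.IsConfig C) (hpq : I.G.Adj p q)
    (hmin : ∀ r, I.G.Adj p r → I.rank p q ≤ I.rank p r) (hp : 0 < I.b p) (hqC : s(p, q) ∉ C) :
    I.Willing C p q := by
  by_cases hum : I.UnderMated C p
  · exact .inl hum
  obtain ⟨w, hw⟩ : (mates C p).Nonempty := card_pos.mp (by unfold UnderMated at hum; omega)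
  exact .inr ⟨w, hw, I.rank_lt_of_forall_rank_le hpq hmin (hC.adj hw)
    (by rintro rfl; exact hqC (mem_mates.mp hw))⟩

lemma LovingPair.blockingPair (hL : I.LovingPair p q) (hp : 0 < I.b p) (hq : 0 < I.b q)
    {C : Finset (Sym2 P)} (hC : I.IsConfig C) (hpqC : s(p, q) ∉ C) : I.BlockingPair C p q :=
  ⟨hL.1, hpqC, willing_of_forall_rank_le hC hL.1 hL.2.1 hp hpqC,
    willing_of_forall_rank_le hC hL.1.symm hL.2.2 hq (Sym2.eq_swap ▸ hpqC)⟩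

lemma IsStable.mem_of_lovingPair {D : Finset (Sym2 P)} (hD : I.IsStable D)
    (hL : I.LovingPair p q) (hp : 0 < I.b p) (hq : 0 < I.b q) : s(p, q) ∈ D := by
  by_contra h
  exact hD.2 p q (hL.blockingPair hp hq hD.1 h)

end LovingPair

def deleteEdge (e : Sym2 P) : PrefInstance P :=
  { I with
    G := I.G.deleteEdges {e}
    rank_injOn := fun p => (I.rank_injOn p).mono fun _ h => (SimpleGraph.deleteEdges_adj.mp h).1 }

/-- What remains of the instance once the loving pair `{p, q}` is matched for good. -/
def reduce (p q : P) : PrefInstance P :=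
  { I.deleteEdge s(p, q) with b := fun x => if x = p ∨ x = q then I.b x - 1 else I.b x }

variable {I} in
lemma Acyclic.mono (hI : I.Acyclic) {J : PrefInstance P} (hG : J.G ≤ I.G)
    (hrank : J.rank = I.rank) : J.Acyclic := by
  rintro ⟨k, f, hk, hf, hcycle⟩
  refine hI ⟨k, f, hk, hf, fun i => ?_⟩
  obtain ⟨h₁, h₂, h₃⟩ := hcycle i
  exact ⟨hG h₁, hG h₂, hrank ▸ h₃⟩

lemma ncard_edgeSet_deleteEdge {x y : P} (h : I.G.Adj x y) :
    (I.deleteEdge s(x, y)).G.edgeSet.ncard + 1 = I.G.edgeSet.ncard := by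
  have he : s(x, y) ∈ I.G.edgeSet := h
  have := (Set.ncard_pos (Set.toFinite _)).mpr ⟨_, he⟩
  simp only [deleteEdge, SimpleGraph.edgeSet_deleteEdges, Set.ncard_sdiff_singleton_of_mem he]
  omega

theorem Acyclic.induction {motive : PrefInstance P → Prop}
    (edgeless : ∀ I : PrefInstance P, I.G = ⊥ → motive I)
    (zeroQuota : ∀ (I : PrefInstance P) (x y : P), I.G.Adj x y → I.b x = 0 →
      motive (I.deleteEdge s(x, y)) → motive I)
    (lovingPair : ∀ (I : PrefInstance P) (p q : P), I.LovingPair p q → 0 < I.b p → 0 < I.b q →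
      motive (I.reduce p q) → motive I)
    (I : PrefInstance P) (hI : I.Acyclic) : motive I := by
  induction hn : I.G.edgeSet.ncard generalizing I with
  | zero => exact edgeless I (SimpleGraph.edgeSet_eq_empty.mp ((Set.ncard_eq_zero).mp hn))
  | succ n ih =>
    have ih' {x y : P} (hxy : I.G.Adj x y) (J : PrefInstance P)
        (hG : J.G = (I.deleteEdge s(x, y)).G) (hrank : J.rank = I.rank) : motive J := by
      refine ih J (hI.mono (hG ▸ SimpleGraph.deleteEdges_le _) hrank) ?_
      have := I.ncard_edgeSet_deleteEdge hxy
      rw [hG]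
      omega
    by_cases hzero : ∃ x y, I.G.Adj x y ∧ I.b x = 0
    · obtain ⟨x, y, hxy, hx⟩ := hzero
      exact zeroQuota I x y hxy hx (ih' hxy _ rfl rfl)
    push Not at hzero
    obtain ⟨e, he⟩ := Set.nonempty_of_ncard_ne_zero (by omega : I.G.edgeSet.ncard ≠ 0)
    induction e using Sym2.ind with | _ x y => ?_
    obtain ⟨p, q, hL⟩ := hI.exists_lovingPair he
    exact lovingPair I p q hL (Nat.pos_of_ne_zero (hzero p q hL.1))
      (Nat.pos_of_ne_zero (hzero q p hL.1.symm)) (ih' hL.1 _ rfl rfl)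

section DeleteEdge

variable {I} {C : Finset (Sym2 P)} {x y : P}

lemma IsConfig.not_willing_of_b_eq_zero (hC : I.IsConfig C) (hx : I.b x = 0) (w : P) :
    ¬ I.Willing C x w := by
  rintro (hum | ⟨w', hw', -⟩)
  · exact Nat.not_lt_zero _ (hx ▸ hum : (mates C x).card < 0)
  · exact (card_pos.mpr ⟨w', hw'⟩).ne' (Nat.eq_zero_of_le_zero (hx ▸ hC.2 x))

lemma isConfig_deleteEdge_iff (hx : I.b x = 0) :
    (I.deleteEdge s(x, y)).IsConfig C ↔ I.IsConfig C := by
  simp only [IsConfig, deleteEdge, SimpleGraph.edgeSet_deleteEdges, Set.mem_sdiff,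
    Set.mem_singleton_iff]
  refine ⟨fun h => ⟨fun e he => (h.1 e he).1, h.2⟩, fun h => ⟨fun e he => ⟨h.1 e he, ?_⟩, h.2⟩⟩
  rintro rfl
  exact (card_pos.mpr ⟨y, mem_mates.mpr he⟩).ne' (Nat.eq_zero_of_le_zero (hx ▸ h.2 x))

lemma blockingPair_deleteEdge_iff (hC : I.IsConfig C) (hx : I.b x = 0) {p q : P} :
    (I.deleteEdge s(x, y)).BlockingPair C p q ↔ I.BlockingPair C p q := by
  refine ⟨fun h => ⟨SimpleGraph.deleteEdges_le _ h.1, h.2⟩, fun h => ⟨?_, h.2⟩⟩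
  refine SimpleGraph.deleteEdges_adj.mpr ⟨h.1, fun hxy => ?_⟩
  rcases Sym2.eq_iff.mp (Set.mem_singleton_iff.mp hxy) with ⟨rfl, -⟩ | ⟨-, rfl⟩
  · exact hC.not_willing_of_b_eq_zero hx _ h.2.2.1
  · exact hC.not_willing_of_b_eq_zero hx _ h.2.2.2

lemma isStable_deleteEdge_iff (hx : I.b x = 0) :
    (I.deleteEdge s(x, y)).IsStable C ↔ I.IsStable C := by
  unfold IsStable
  rw [isConfig_deleteEdge_iff hx]
  exact and_congr_right fun hC => forall₂_congr fun p q =>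
    not_congr (blockingPair_deleteEdge_iff hC hx)

lemma ReachesStableWithin.of_deleteEdge {n : ℕ}
    (h : (I.deleteEdge s(x, y)).ReachesStableWithin C n) (hx : I.b x = 0) :
    I.ReachesStableWithin C n := by
  obtain ⟨k, f, hk, h0, hsteps, hstable⟩ := h
  refine ⟨k, f, hk, h0, fun i hi => ?_, (isStable_deleteEdge_iff hx).mp hstable⟩
  obtain ⟨p, q, hB, hres⟩ := hsteps i hi
  exact ⟨p, q, ⟨SimpleGraph.deleteEdges_le _ hB.1, hB.2⟩, hres⟩

end DeleteEdge

section Reduce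

variable {I} {p q : P} {E : Finset (Sym2 P)}

lemma reduce_adj {a c : P} : (I.reduce p q).G.Adj a c ↔ I.G.Adj a c ∧ s(a, c) ≠ s(p, q) := by
  simp [reduce, deleteEdge]

lemma sum_reduce_b_add_two (hpq : p ≠ q) (hp : 0 < I.b p) (hq : 0 < I.b q) :
    ∑ x, (I.reduce p q).b x + 2 = ∑ x, I.b x := by
  have hb (x : P) : I.b x = (I.reduce p q).b x + if x ∈ ({p, q} : Finset P) then 1 else 0 := by
    simp only [reduce, mem_insert, mem_singleton]
    split_ifs with h
    · rcases h with rfl | rfl <;> omega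
    · rfl
  rw [sum_congr rfl fun x _ => hb x, sum_add_distrib, sum_ite_mem, univ_inter, sum_const,
    card_pair hpq, smul_eq_mul, mul_one]

lemma notMem_of_isConfig_reduce (hE : (I.reduce p q).IsConfig E) : s(p, q) ∉ E := fun h =>
  (reduce_adj.mp (hE.1 _ h)).2 rfl

/-- Seen from a single peer `x`, adding the loving pair `{p, q}` either changes nothing or gives
`x` one more unit of quota together with its favourite neighbour as a new mate. -/
lemma LovingPair.mates_insert_cases (hL : I.LovingPair p q) (hp : 0 < I.b p) (hq : 0 < I.b q)
    (hE : s(p, q) ∉ E) (x : P) :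
    (mates (insert s(p, q) E) x = mates E x ∧ I.b x = (I.reduce p q).b x) ∨
    ∃ m, I.G.Adj x m ∧ (∀ r, I.G.Adj x r → I.rank x m ≤ I.rank x r) ∧ m ∉ mates E x ∧
      mates (insert s(p, q) E) x = insert m (mates E x) ∧ I.b x = (I.reduce p q).b x + 1 := by
  rcases eq_or_ne x p with rfl | hxp
  · refine .inr ⟨q, hL.1, hL.2.1, mem_mates.not.mpr hE, mates_insert_left, ?_⟩
    simp only [reduce, true_or, if_true]
    omega
  rcases eq_or_ne x q with rfl | hxq
  · refine .inr ⟨p, hL.1.symm, hL.2.2, ?_, mates_insert_right, ?_⟩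
    · rwa [mem_mates, Sym2.eq_swap]
    · simp only [reduce, or_true, if_true]
      omega
  · refine .inl ⟨mates_insert_of_ne hxp hxq, ?_⟩
    simp [reduce, hxp, hxq]

lemma LovingPair.card_mates_insert_add (hL : I.LovingPair p q) (hp : 0 < I.b p)
    (hq : 0 < I.b q) (hE : s(p, q) ∉ E) (x : P) :
    (mates (insert s(p, q) E) x).card + (I.reduce p q).b x = (mates E x).card + I.b x := by
  rcases hL.mates_insert_cases hp hq hE x with ⟨hM, hb⟩ | ⟨m, -, -, hm, hM, hb⟩
  · rw [hM, hb]
  · rw [hM, hb, card_insert_of_notMem hm]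
    omega

lemma LovingPair.isConfig_insert_iff (hL : I.LovingPair p q) (hp : 0 < I.b p) (hq : 0 < I.b q)
    (hE : s(p, q) ∉ E) : I.IsConfig (insert s(p, q) E) ↔ (I.reduce p q).IsConfig E := by
  have hcard := hL.card_mates_insert_add hp hq hE
  refine and_congr ⟨fun h e he => ?_, fun h e he => ?_⟩ (forall_congr' fun x => by
    have := hcard x; omega)
  · induction e using Sym2.ind with | _ a c => ?_
    exact reduce_adj.mpr ⟨h _ (mem_insert_of_mem he), fun hac => hE (hac ▸ he)⟩
  · rcases mem_insert.mp he with rfl | he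
    · exact hL.1
    · induction e using Sym2.ind with | _ a c => exact (reduce_adj.mp (h _ he)).1

lemma LovingPair.willing_insert_iff (hL : I.LovingPair p q) (hp : 0 < I.b p) (hq : 0 < I.b q)
    (hE : s(p, q) ∉ E) {x y : P} (hxy : I.G.Adj x y) :
    I.Willing (insert s(p, q) E) x y ↔ (I.reduce p q).Willing E x y := by
  have hcard := hL.card_mates_insert_add hp hq hE x
  refine or_congr (by unfold UnderMated; omega) ?_
  rcases hL.mates_insert_cases hp hq hE x with ⟨hM, -⟩ | ⟨m, -, hmin, -, hM, -⟩
  · rw [hM]; rfl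
  · rw [hM, exists_mem_insert, or_iff_right (hmin y hxy).not_gt]; rfl

lemma LovingPair.blockingPair_insert_iff (hL : I.LovingPair p q) (hp : 0 < I.b p)
    (hq : 0 < I.b q) (hE : s(p, q) ∉ E) {x y : P} :
    I.BlockingPair (insert s(p, q) E) x y ↔ (I.reduce p q).BlockingPair E x y := by
  simp only [BlockingPair, reduce_adj, mem_insert, not_or]
  constructor
  · rintro ⟨hxy, ⟨hne, hxyE⟩, hx, hy⟩
    exact ⟨⟨hxy, hne⟩, hxyE, (hL.willing_insert_iff hp hq hE hxy).mp hx,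
      (hL.willing_insert_iff hp hq hE hxy.symm).mp hy⟩
  · rintro ⟨⟨hxy, hne⟩, hxyE, hx, hy⟩
    exact ⟨hxy, ⟨hne, hxyE⟩, (hL.willing_insert_iff hp hq hE hxy).mpr hx,
      (hL.willing_insert_iff hp hq hE hxy.symm).mpr hy⟩

lemma LovingPair.isStable_insert_iff (hL : I.LovingPair p q) (hp : 0 < I.b p) (hq : 0 < I.b q)
    (hE : s(p, q) ∉ E) : I.IsStable (insert s(p, q) E) ↔ (I.reduce p q).IsStable E :=
  and_congr (hL.isConfig_insert_iff hp hq hE) (forall₂_congr fun _ _ =>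
    not_congr (hL.blockingPair_insert_iff hp hq hE))

/-- The favourite `m` outranks every current mate of `x`, so it is never the worst one. -/
lemma LovingPair.dropEdges_insert (hL : I.LovingPair p q) (hp : 0 < I.b p) (hq : 0 < I.b q)
    (hE : (I.reduce p q).IsConfig E) {x : P}
    (hx : (I.reduce p q).UnderMated E x ∨ (mates E x).Nonempty) :
    I.dropEdges (insert s(p, q) E) x = (I.reduce p q).dropEdges E x := by
  rcases hL.mates_insert_cases hp hq (notMem_of_isConfig_reduce hE) x with
    ⟨hM, hb⟩ | ⟨m, hm, hmin, hmE, hM, hb⟩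
  · unfold dropEdges; rw [hM, hb]; rfl
  have hlt : ∀ w ∈ mates E x, I.rank x m < I.rank x w := fun w hw =>
    I.rank_lt_of_forall_rank_le hm hmin (reduce_adj.mp (hE.adj hw)).1 (by rintro rfl; exact hmE hw)
  unfold dropEdges
  rw [hM, card_insert_of_notMem hmE, hb]
  by_cases hum : (mates E x).card < (I.reduce p q).b x
  · rw [if_pos (by omega), if_pos hum]
  rw [if_neg (by omega), if_neg hum]
  obtain ⟨w₀, hw₀⟩ := hx.resolve_left hum
  congr 1
  ext w
  simp only [mem_filter, mem_insert, forall_eq_or_imp]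
  constructor
  · rintro ⟨rfl | hw, -, hworst⟩
    · exact absurd (hworst w₀ hw₀) (hlt w₀ hw₀).not_ge
    · exact ⟨hw, hworst⟩
  · rintro ⟨hw, hworst⟩
    exact ⟨.inr hw, (hlt w hw).le, hworst⟩

lemma LovingPair.resolve_insert (hL : I.LovingPair p q) (hp : 0 < I.b p) (hq : 0 < I.b q)
    (hE : (I.reduce p q).IsConfig E) {x y : P} (hB : (I.reduce p q).BlockingPair E x y) :
    I.resolve (insert s(p, q) E) x y = insert s(p, q) ((I.reduce p q).resolve E x y) := by
  have hdrop : s(p, q) ∉ (I.reduce p q).dropEdges E x ∪ (I.reduce p q).dropEdges E y :=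
    fun h => notMem_of_isConfig_reduce hE (union_subset (dropEdges_subset x) (dropEdges_subset y) h)
  unfold resolve
  rw [hL.dropEdges_insert hp hq hE hB.2.2.1.underMated_or_nonempty,
    hL.dropEdges_insert hp hq hE hB.2.2.2.underMated_or_nonempty, insert_sdiff_of_notMem _ hdrop,
    insert_comm]

lemma LovingPair.reachesStableWithin_insert (hL : I.LovingPair p q) (hp : 0 < I.b p)
    (hq : 0 < I.b q) (hE : (I.reduce p q).IsConfig E) {n : ℕ}
    (h : (I.reduce p q).ReachesStableWithin E n) :
    I.ReachesStableWithin (insert s(p, q) E) n := by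
  obtain ⟨k, f, hk, h0, hsteps, hstable⟩ := h
  have hconfig := isConfig_of_activeSteps (h0 ▸ hE) hsteps
  refine ⟨k, fun i => insert s(p, q) (f i), hk, congrArg _ h0, fun i hi => ?_,
    (hL.isStable_insert_iff hp hq (notMem_of_isConfig_reduce hstable.1)).mpr hstable⟩
  obtain ⟨x, y, hB, hres⟩ := hsteps i hi
  have hEi := hconfig i hi.le
  refine ⟨x, y, (hL.blockingPair_insert_iff hp hq (notMem_of_isConfig_reduce hEi)).mpr hB, ?_⟩
  simp only [hres, hL.resolve_insert hp hq hEi hB]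

end Reduce

variable {I} in
theorem Acyclic.reachesStableWithin (hI : I.Acyclic) {C : Finset (Sym2 P)} (hC : I.IsConfig C) :
    I.ReachesStableWithin C ((∑ p, I.b p) / 2) := by
  refine Acyclic.induction
    (motive := fun I => ∀ {C}, I.IsConfig C → I.ReachesStableWithin C ((∑ p, I.b p) / 2))
    (fun I hG C hC => ?_) (fun I _ _ _ hx ih C hC => ?_) (fun I p q hL hp hq ih C hC => ?_) I hI hC
  · exact IsStable.reachesStableWithin ⟨hC, fun p q h => by simpa [hG] using h.1⟩ _
  · exact (ih ((isConfig_deleteEdge_iff hx).mpr hC)).of_deleteEdge hx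
  · have hsum := sum_reduce_b_add_two hL.1.ne hp hq
    have lift {C : Finset (Sym2 P)} (hC : I.IsConfig C) (hpqC : s(p, q) ∈ C) :
        I.ReachesStableWithin C ((∑ x, (I.reduce p q).b x) / 2) := by
      have hE := (hL.isConfig_insert_iff hp hq (notMem_erase _ C)).mp (by rwa [insert_erase hpqC])
      simpa only [insert_erase hpqC] using hL.reachesStableWithin_insert hp hq hE (ih hE)
    by_cases hpqC : s(p, q) ∈ C
    · exact (lift hC hpqC).mono (by omega)
    · have hB := hL.blockingPair hp hq hC hpqC
      exact ((lift (hC.resolve hB) (mem_insert_self _ _)).cons ⟨p, q, hB, rfl⟩).mono (by omega)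

variable {I} in
theorem Acyclic.eq_of_isStable (hI : I.Acyclic) {D D' : Finset (Sym2 P)} (hD : I.IsStable D)
    (hD' : I.IsStable D') : D = D' := by
  refine Acyclic.induction (motive := fun I => ∀ {D D'}, I.IsStable D → I.IsStable D' → D = D')
    (fun I hG D D' hD hD' => ?_) (fun I _ _ _ hx ih D D' hD hD' => ?_)
    (fun I p q hL hp hq ih D D' hD hD' => ?_) I hI hD hD'
  · have hempty {D : Finset (Sym2 P)} (hD : I.IsStable D) : D = ∅ :=
      eq_empty_of_forall_notMem fun e he => by simpa [hG] using hD.1.1 e he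
    rw [hempty hD, hempty hD']
  · exact ih ((isStable_deleteEdge_iff hx).mpr hD) ((isStable_deleteEdge_iff hx).mpr hD')
  · have hreduce {D : Finset (Sym2 P)} (hD : I.IsStable D) :
        (I.reduce p q).IsStable (D.erase s(p, q)) :=
      (hL.isStable_insert_iff hp hq (notMem_erase _ D)).mp
        (by rwa [insert_erase (hD.mem_of_lovingPair hL hp hq)])
    rw [← insert_erase (hD.mem_of_lovingPair hL hp hq),
      ← insert_erase (hD'.mem_of_lovingPair hL hp hq), ih (hreduce hD) (hreduce hD')]

end PrefInstance

variable {P : Type*} [Fintype P] [DecidableEq P]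

open PrefInstance

/-- For any acyclic instance and any initial configuration
`C`, there is a sequence of at most `B / 2` active initiatives leading from `C`
to the unique stable configuration, where `B` is the sum of all quotas. -/
theorem acyclic_short_sequence_to_stable (I : PrefInstance P) (hI : I.Acyclic)
    (C : Finset (Sym2 P)) (hC : I.IsConfig C) :
    ∃ (k : ℕ) (f : ℕ → Finset (Sym2 P)), k ≤ (∑ p : P, I.b p) / 2 ∧ f 0 = C ∧
      (∀ i < k, I.ActiveStep (f i) (f (i + 1))) ∧ I.IsStable (f k) ∧
      ∀ D : Finset (Sym2 P), I.IsStable D → D = f k := by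
  obtain ⟨k, f, hk, hf0, hsteps, hstable⟩ := hI.reachesStableWithin hC
  exact ⟨k, f, hk, hf0, hsteps, hstable, fun D hD => hI.eq_of_isStable hD hstable⟩
end
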